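/- Let n and m be finite index types, let Φ : Matrix n n ℂ → Matrix m m ℂ be a ℂ-linear map that sends positive semidefinite matrices to positive semidefinite matrices, and let σ, τ, ρ be density matrices on the n-indexed space such that ρ = F·σ + (1−F)·τ for some real F with 0 ≤ F ≤ 1. If Φ(σ) is positive semidefinite and satisfies Tr(Φ(σ)·Φ(σ)) = 1 (i.e., Φ(σ) is a pure state), then Re Tr(Φ(σ)·Φ(ρ)) ≥ F. -/

import Mathlib

/-! By linearity, `Tr(Φσ Φρ) = F Tr(Φσ Φσ) + (1 - F) Tr(Φσ Φτ)`. Purity makes the first trace `1`;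
the second is nonnegative since, writing the positive `Φτ` as `Xᴴ X`, it equals `Tr(X Φσ Xᴴ)`,
the trace of a positive semidefinite matrix. -/

open Matrix ComplexOrder

open scoped MatrixOrder in
theorem Matrix.PosSemidef.trace_mul_nonneg {n 𝕜 : Type*} [Fintype n] [RCLike 𝕜]
    {A B : Matrix n n 𝕜} (hA : A.PosSemidef) (hB : B.PosSemidef) : 0 ≤ (A * B).trace := by
  classical
  obtain ⟨X, rfl⟩ := CStarAlgebra.nonneg_iff_eq_star_mul_self.mp hB.nonneg
  rw [← mul_assoc, trace_mul_comm, ← mul_assoc]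
  exact (hA.mul_mul_conjTranspose_same X).trace_nonneg

theorem Matrix.PosSemidef.le_trace_mul_mixture {n : Type*} [Fintype n] {P Q : Matrix n n ℂ}
    (hP : P.PosSemidef) (hPpure : (P * P).trace = 1) (hQ : Q.PosSemidef) {F : ℝ} (hF : F ≤ 1) :
    (F : ℂ) ≤ (P * ((F : ℂ) • P + ((1 - F : ℝ) : ℂ) • Q)).trace := by
  rw [mul_add, mul_smul_comm, mul_smul_comm, trace_add, trace_smul, trace_smul, hPpure,
    smul_eq_mul, mul_one, smul_eq_mul]
  have hweight : (0 : ℂ) ≤ ((1 - F : ℝ) : ℂ) := by exact_mod_cast sub_nonneg.mpr hF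
  exact le_add_of_nonneg_right (mul_nonneg hweight (hP.trace_mul_nonneg hQ))

theorem output_fidelity_lower_bound_general
    {n m : Type*} [Fintype m]
    (Φ : Matrix n n ℂ →ₗ[ℂ] Matrix m m ℂ)
    (hΦpos : ∀ A : Matrix n n ℂ, A.PosSemidef → (Φ A).PosSemidef)
    (σ τ ρ : Matrix n n ℂ)
    (hτ : τ.PosSemidef)
    (F : ℝ) (hF1 : F ≤ 1)
    (hdecomp : ρ = (F : ℂ) • σ + ((1 - F : ℝ) : ℂ) • τ)
    (hΦσpsd : (Φ σ).PosSemidef) (hΦσpure : ((Φ σ) * (Φ σ)).trace = 1) :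
    F ≤ ((Φ σ * Φ ρ).trace).re := by
  have hmix : Φ ρ = (F : ℂ) • Φ σ + ((1 - F : ℝ) : ℂ) • Φ τ := by
    rw [hdecomp, map_add, map_smul, map_smul]
  rw [hmix]
  exact Complex.re_le_re (hΦσpsd.le_trace_mul_mixture hΦσpure (hΦpos τ hτ) hF1)

/-- Lemma 1 core: For a positive ℂ-linear map Φ and density matrices
σ, τ, ρ with ρ = F·σ + (1−F)·τ, 0 ≤ F ≤ 1, if Φ(σ) is PSD with Tr(Φ(σ)·Φ(σ)) = 1
(a pure state), then Re Tr(Φ(σ)·Φ(ρ)) ≥ F. -/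
theorem output_fidelity_lower_bound
    {n m : Type*} [Fintype n] [DecidableEq n] [Fintype m] [DecidableEq m]
    (Φ : Matrix n n ℂ →ₗ[ℂ] Matrix m m ℂ)
    (hΦpos : ∀ A : Matrix n n ℂ, A.PosSemidef → (Φ A).PosSemidef)
    (σ τ ρ : Matrix n n ℂ)
    (hσ : σ.PosSemidef) (hσtr : σ.trace = 1)
    (hτ : τ.PosSemidef) (hτtr : τ.trace = 1)
    (hρ : ρ.PosSemidef) (hρtr : ρ.trace = 1)
    (F : ℝ) (hF0 : 0 ≤ F) (hF1 : F ≤ 1)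
    (hdecomp : ρ = (F : ℂ) • σ + ((1 - F : ℝ) : ℂ) • τ)
    (hΦσpsd : (Φ σ).PosSemidef) (hΦσpure : ((Φ σ) * (Φ σ)).trace = 1) :
    F ≤ ((Φ σ * Φ ρ).trace).re :=
  output_fidelity_lower_bound_general Φ hΦpos σ τ ρ hτ F hF1 hdecomp hΦσpsd hΦσpure
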